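/- Every solution of the impulsive system x'(t) + π·x(t − 1/2) + c(t)·x([t−1]) = 0 for t ≠ n (n = 1, 2, ...), with impulse condition x(n⁺) − x(n⁻) = −x(n⁺), where c : [0,∞) → [0,∞) is continuous, is oscillatory. -/

import Mathlib

/-!
With `w t = 2 ^ ⌊t⌋ * x t` the impulses disappear: the jump condition `x(n⁻) = 2 x(n)` makes `w`
continuous, and off the integers `w' ≤ -π w(t - 1/2)` as soon as `x > 0` on `[t - 2, t]`, since
`c ≥ 0`. So an eventually positive solution gives an eventually positive, eventually nonincreasing
`w`, and on an interval `[a, a + 1/2]` free of integers the mean value theorem gives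
`w(a + 1/2) - w a = w'(ξ) / 2 ≤ -(π/2) w(ξ - 1/2) ≤ -(π/2) w a`, i.e.
`w(a + 1/2) ≤ (1 - π/2) w a < 0`, which is absurd. Negative solutions are handled by the symmetry `x ↦ -x`.
-/

open Filter Topology Set

theorem floor_lt_self_of_mem_Ioo {m : ℤ} {t : ℝ} (ht : t ∈ Ioo (m : ℝ) (m + 1)) :
    (⌊t⌋ : ℝ) < t := by
  rw [Int.floor_eq_iff.2 ⟨ht.1.le, ht.2⟩]
  exact ht.1

theorem antitoneOn_Ici_of_antitoneOn_Icc_add_one {β : Type*} [Preorder β] {f : ℝ → β} {a : ℝ}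
    (h : ∀ n : ℕ, AntitoneOn f (Icc (a + n) (a + n + 1))) : AntitoneOn f (Ici a) := by
  have hIcc : ∀ k : ℕ, AntitoneOn f (Icc a (a + k)) := by
    intro k
    induction k with
    | zero => simp
    | succ k ih =>
      have hk : a ≤ a + k := by linarith [k.cast_nonneg (α := ℝ)]
      have := ih.union_right (h k) (isGreatest_Icc hk) (isLeast_Icc (by linarith))
      rw [Nat.cast_succ, ← add_assoc]
      rwa [Icc_union_Icc_eq_Icc hk (by linarith)] at this
  intro s hs t ht hst
  obtain ⟨k, hk⟩ := exists_nat_ge (t - a)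
  exact hIcc k ⟨hs, by linarith⟩ ⟨ht, by linarith⟩ hst

theorem antitoneOn_Ici_of_hasDerivAt_nonpos {f f' : ℝ → ℝ} {N : ℤ}
    (hf : ContinuousOn f (Ici (N : ℝ)))
    (hf' : ∀ t, (N : ℝ) < t → (⌊t⌋ : ℝ) < t → HasDerivAt f (f' t) t)
    (hf'₀ : ∀ t, (N : ℝ) < t → (⌊t⌋ : ℝ) < t → f' t ≤ 0) :
    AntitoneOn f (Ici (N : ℝ)) := by
  refine antitoneOn_Ici_of_antitoneOn_Icc_add_one fun n => ?_
  have hN : ∀ t ∈ interior (Icc ((N : ℝ) + n) (N + n + 1)), (N : ℝ) < t ∧ (⌊t⌋ : ℝ) < t := by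
    rw [interior_Icc]
    intro t ht
    refine ⟨by linarith [ht.1, n.cast_nonneg (α := ℝ)], floor_lt_self_of_mem_Ioo (m := N + n) ?_⟩
    push_cast
    exact ht
  refine antitoneOn_of_hasDerivWithinAt_nonpos (convex_Icc _ _)
    (hf.mono fun t ht => mem_Ici.2 (by linarith [ht.1, n.cast_nonneg (α := ℝ)]))
    (fun t ht => (hf' t (hN t ht).1 (hN t ht).2).hasDerivWithinAt)
    (fun t ht => hf'₀ t (hN t ht).1 (hN t ht).2)

theorem le_one_sub_mul_of_hasDerivAt_le_neg_delay {w w' : ℝ → ℝ} {a p τ : ℝ} (hp : 0 ≤ p)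
    (hτ : 0 < τ) (hanti : AntitoneOn w (Icc (a - τ) a)) (hw : ContinuousOn w (Icc a (a + τ)))
    (hw' : ∀ t ∈ Ioo a (a + τ), HasDerivAt w (w' t) t)
    (hle : ∀ t ∈ Ioo a (a + τ), w' t ≤ -p * w (t - τ)) :
    w (a + τ) ≤ (1 - p * τ) * w a := by
  obtain ⟨ξ, hξ, hslope⟩ := exists_hasDerivAt_eq_slope w w' (by linarith) hw hw'
  have hdelay : w a ≤ w (ξ - τ) :=
    hanti ⟨by linarith [hξ.1], by linarith [hξ.2]⟩ ⟨by linarith, le_rfl⟩ (by linarith [hξ.2])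
  calc w (a + τ) = w a + τ * w' ξ := by
        rw [hslope, add_sub_cancel_left]
        field_simp
        ring
    _ ≤ w a + τ * (-p * w (ξ - τ)) := by gcongr; exact hle ξ hξ
    _ ≤ w a + τ * (-p * w a) := by
        linarith [mul_le_mul_of_nonneg_left hdelay (mul_nonneg hτ.le hp)]
    _ = (1 - p * τ) * w a := by ring

structure IsImpulsiveSolution (c x : ℝ → ℝ) : Prop where
  hasDerivAt : ∀ t, 0 < t → (∀ n : ℕ, 0 < n → t ≠ (n : ℝ)) →
    HasDerivAt x (-(Real.pi * x (t - 1 / 2) + c t * x ((⌊t - 1⌋ : ℤ) : ℝ))) t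
  continuousWithinAt_Ici : ∀ n : ℕ, 0 < n → ContinuousWithinAt x (Ici (n : ℝ)) (n : ℝ)
  tendsto_nhdsLT : ∀ n : ℕ, 0 < n → Tendsto x (𝓝[<] (n : ℝ)) (𝓝 (2 * x (n : ℝ)))

/-- The paper's `∏_{0 < n ≤ t} (1 - b_n) x(t)` with `1 - b_n = 2`. -/
noncomputable def impulseScaled (x : ℝ → ℝ) (t : ℝ) : ℝ := 2 ^ ⌊t⌋ * x t

theorem impulseScaled_of_mem_Ico {x : ℝ → ℝ} {m : ℤ} {t : ℝ} (ht : t ∈ Ico (m : ℝ) (m + 1)) :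
    impulseScaled x t = 2 ^ m * x t := by
  rw [impulseScaled, Int.floor_eq_iff.2 ht]

theorem impulseScaled_pos {x : ℝ → ℝ} {t : ℝ} (ht : 0 < x t) : 0 < impulseScaled x t :=
  mul_pos (zpow_pos two_pos _) ht

theorem impulseScaled_deriv_le {c x : ℝ → ℝ} (hcnn : ∀ t, 0 ≤ c t) {T : ℝ}
    (hpos : ∀ t, T < t → 0 < x t) {t : ℝ} (ht : T + 2 ≤ t) :
    2 ^ ⌊t⌋ * -(Real.pi * x (t - 1 / 2) + c t * x ((⌊t - 1⌋ : ℤ) : ℝ)) ≤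
      -Real.pi * impulseScaled x (t - 1 / 2) := by
  have hdelay : 0 < x (t - 1 / 2) := hpos _ (by linarith)
  have hlag : 0 < x ((⌊t - 1⌋ : ℤ) : ℝ) := hpos _ (by linarith [Int.sub_one_lt_floor (t - 1)])
  have hweight : (2 : ℝ) ^ ⌊t - 1 / 2⌋ ≤ 2 ^ ⌊t⌋ :=
    zpow_le_zpow_right₀ one_le_two (Int.floor_mono (by linarith))
  calc 2 ^ ⌊t⌋ * -(Real.pi * x (t - 1 / 2) + c t * x ((⌊t - 1⌋ : ℤ) : ℝ))
      ≤ 2 ^ ⌊t⌋ * -(Real.pi * x (t - 1 / 2)) := by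
        gcongr
        linarith [mul_nonneg (hcnn t) hlag.le]
    _ ≤ -Real.pi * impulseScaled x (t - 1 / 2) := by
        rw [impulseScaled]
        nlinarith [mul_le_mul_of_nonneg_right hweight (mul_pos Real.pi_pos hdelay).le]

namespace IsImpulsiveSolution

variable {c x : ℝ → ℝ}

theorem neg (hx : IsImpulsiveSolution c x) : IsImpulsiveSolution c (-x) where
  hasDerivAt t ht hn :=
    (hx.hasDerivAt t ht hn).neg.congr_deriv (by simp only [Pi.neg_apply]; ring)
  continuousWithinAt_Ici n hn := (hx.continuousWithinAt_Ici n hn).neg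
  tendsto_nhdsLT n hn := by
    rw [Pi.neg_apply, mul_neg]
    exact (hx.tendsto_nhdsLT n hn).neg

theorem hasDerivAt_impulseScaled (hx : IsImpulsiveSolution c x) {t : ℝ} (ht₀ : 0 < t)
    (ht : (⌊t⌋ : ℝ) < t) :
    HasDerivAt (impulseScaled x)
      (2 ^ ⌊t⌋ * -(Real.pi * x (t - 1 / 2) + c t * x ((⌊t - 1⌋ : ℤ) : ℝ))) t := by
  have hnat : ∀ n : ℕ, 0 < n → t ≠ n := by
    rintro n - rfl
    simp at ht
  refine ((hx.hasDerivAt t ht₀ hnat).const_mul _).congr_of_eventuallyEq ?_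
  filter_upwards [Ioo_mem_nhds ht (Int.lt_floor_add_one t)] with s hs
  exact impulseScaled_of_mem_Ico ⟨hs.1.le, hs.2⟩

theorem continuousAt_impulseScaled_natCast (hx : IsImpulsiveSolution c x) {n : ℕ} (hn : 0 < n) :
    ContinuousAt (impulseScaled x) n := by
  have hvalue : impulseScaled x n = 2 ^ (n : ℤ) * x n :=
    impulseScaled_of_mem_Ico (m := n) ⟨by simp, by simp⟩
  refine continuousAt_iff_continuous_left'_right'.2 ⟨?_, ?_⟩
  · have hjump : impulseScaled x n = 2 ^ ((n : ℤ) - 1) * (2 * x n) := by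
      rw [hvalue, zpow_sub_one₀ two_ne_zero]
      ring
    have hlim := (hx.tendsto_nhdsLT n hn).const_mul (2 ^ ((n : ℤ) - 1) : ℝ)
    rw [← hjump] at hlim
    refine hlim.congr' ?_
    filter_upwards [Ico_mem_nhdsLT (by linarith : (n : ℝ) - 1 < n)] with s hs
    exact (impulseScaled_of_mem_Ico (m := n - 1)
      ⟨by push_cast; exact hs.1, by push_cast; linarith [hs.2]⟩).symm
  · refine (((hx.continuousWithinAt_Ici n hn).const_mul (2 ^ (n : ℤ) : ℝ)).mono
      Ioi_subset_Ici_self).congr_of_eventuallyEq ?_ hvalue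
    filter_upwards [Ioo_mem_nhdsGT (by linarith : (n : ℝ) < n + 1)] with s hs
    exact impulseScaled_of_mem_Ico (m := n) ⟨hs.1.le, hs.2⟩

theorem continuousOn_impulseScaled (hx : IsImpulsiveSolution c x) :
    ContinuousOn (impulseScaled x) (Ioi 0) := by
  intro t (ht : 0 < t)
  refine ContinuousAt.continuousWithinAt ?_
  rcases (Int.floor_le t).lt_or_eq with hlt | heq
  · exact (hx.hasDerivAt_impulseScaled ht hlt).continuousAt
  · obtain ⟨n, hn⟩ := Int.eq_ofNat_of_zero_le (Int.floor_nonneg.2 ht.le)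
    rw [hn, Int.cast_natCast] at heq
    rw [← heq] at ht ⊢
    exact hx.continuousAt_impulseScaled_natCast (by exact_mod_cast ht)

theorem antitoneOn_impulseScaled (hx : IsImpulsiveSolution c x) (hcnn : ∀ t, 0 ≤ c t) {T : ℝ}
    (hpos : ∀ t, T < t → 0 < x t) {N : ℤ} (hN₀ : 0 < N) (hN : T + 2 ≤ N) :
    AntitoneOn (impulseScaled x) (Ici (N : ℝ)) := by
  have hN₀' : (0 : ℝ) < N := by exact_mod_cast hN₀
  refine antitoneOn_Ici_of_hasDerivAt_nonpos
    (hx.continuousOn_impulseScaled.mono fun t ht => lt_of_lt_of_le hN₀' ht)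
    (fun t ht hfl => hx.hasDerivAt_impulseScaled (by linarith) hfl) fun t ht _ => ?_
  have hw : 0 < impulseScaled x (t - 1 / 2) := impulseScaled_pos (hpos _ (by linarith))
  exact (impulseScaled_deriv_le hcnn hpos (by linarith)).trans (by nlinarith [Real.pi_pos])

theorem not_eventually_pos (hx : IsImpulsiveSolution c x) (hcnn : ∀ t, 0 ≤ c t) :
    ¬ ∃ T, ∀ t, T < t → 0 < x t := by
  rintro ⟨T, hpos⟩
  obtain ⟨N, hN₀, hN⟩ : ∃ N : ℤ, 0 < N ∧ T + 2 ≤ N :=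
    ⟨max ⌈T + 2⌉ 1, by simp, by push_cast; exact (Int.le_ceil _).trans (le_max_left _ _)⟩
  have hN₀' : (0 : ℝ) < N := by exact_mod_cast hN₀
  -- `(N + 5/4, N + 7/4)` contains no integer, and its delay `[N + 3/4, N + 5/4]` lies where `w`
  -- is already known to be antitone.
  have hinterval : ∀ t ∈ Ioo ((N : ℝ) + 5 / 4) (N + 5 / 4 + 1 / 2), 0 < t ∧ (⌊t⌋ : ℝ) < t :=
    fun t ht => ⟨by linarith [ht.1], floor_lt_self_of_mem_Ioo (m := N + 1)
      (by push_cast; constructor <;> linarith [ht.1, ht.2])⟩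
  have hdecay := le_one_sub_mul_of_hasDerivAt_le_neg_delay (a := N + 5 / 4) Real.pi_pos.le
    one_half_pos
    ((hx.antitoneOn_impulseScaled hcnn hpos hN₀ hN).mono
      fun t ht => mem_Ici.2 (by linarith [ht.1]))
    (hx.continuousOn_impulseScaled.mono fun t ht => mem_Ioi.2 (by linarith [ht.1]))
    (fun t ht => hx.hasDerivAt_impulseScaled (hinterval t ht).1 (hinterval t ht).2)
    (fun t ht => impulseScaled_deriv_le hcnn hpos (by linarith [ht.1]))
  have hwa : 0 < impulseScaled x (N + 5 / 4) := impulseScaled_pos (hpos _ (by linarith))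
  have hwb : 0 < impulseScaled x (N + 5 / 4 + 1 / 2) := impulseScaled_pos (hpos _ (by linarith))
  nlinarith [Real.pi_gt_three]

end IsImpulsiveSolution

theorem example_one_oscillatory_general
    (c : ℝ → ℝ) (hcnn : ∀ t, 0 ≤ c t)
    (x : ℝ → ℝ)
    (hsol : ∀ t, 0 < t → (∀ n : ℕ, 0 < n → t ≠ (n : ℝ)) →
      HasDerivAt x (-(Real.pi * x (t - 1 / 2) + c t * x ((⌊t - 1⌋ : ℤ) : ℝ))) t)
    (hrc : ∀ n : ℕ, 0 < n → ContinuousWithinAt x (Set.Ici (n : ℝ)) (n : ℝ))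
    (himp : ∀ n : ℕ, 0 < n → Tendsto x (nhdsWithin (n : ℝ) (Set.Iio (n : ℝ)))
      (nhds (2 * x (n : ℝ)))) :
    (¬ ∃ T, ∀ t, T < t → 0 < x t) ∧ (¬ ∃ T, ∀ t, T < t → x t < 0) := by
  have hx : IsImpulsiveSolution c x := ⟨hsol, hrc, himp⟩
  refine ⟨hx.not_eventually_pos hcnn, fun ⟨T, hneg⟩ => hx.neg.not_eventually_pos hcnn ?_⟩
  exact ⟨T, fun t ht => neg_pos.2 (hneg t ht)⟩

/-- Example 1: every solution of `x'(t) + π x(t - 1/2) + c(t) x(⌊t-1⌋) = 0` for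
`t ≠ n` (`n = 1, 2, ...`), with impulse condition `x(n⁺) - x(n⁻) = -x(n⁺)` (so that
`x(n⁻) = 2 x(n)` with `x(n) = x(n⁺)` by right continuity), where `c ≥ 0` is continuous,
is oscillatory. -/
theorem example_one_oscillatory
    (c : ℝ → ℝ) (hc : Continuous c) (hcnn : ∀ t, 0 ≤ c t)
    (x : ℝ → ℝ)
    (hsol : ∀ t, 0 < t → (∀ n : ℕ, 0 < n → t ≠ (n : ℝ)) →
      HasDerivAt x (-(Real.pi * x (t - 1 / 2) + c t * x ((⌊t - 1⌋ : ℤ) : ℝ))) t)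
    (hrc : ∀ n : ℕ, 0 < n → ContinuousWithinAt x (Set.Ici (n : ℝ)) (n : ℝ))
    (himp : ∀ n : ℕ, 0 < n → Tendsto x (nhdsWithin (n : ℝ) (Set.Iio (n : ℝ)))
      (nhds (2 * x (n : ℝ)))) :
    (¬ ∃ T, ∀ t, T < t → 0 < x t) ∧ (¬ ∃ T, ∀ t, T < t → x t < 0) :=
  example_one_oscillatory_general c hcnn x hsol hrc himp
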